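/- arXiv:1904.06729 — 2 statements merged into one kernel-verified Lean document; each statement's English description precedes it below -/
import Mathlib

section
/- Let X be a real uniformly smooth Banach space with modulus of smoothness ρ_X, and let S_1, S_2, … be a family of subsets of X such that a ∈ ⋂_{i=1}^∞ conv S_i and D = sup_i diam S_i < ∞. Then there is an absolute constant C > 0 (independent of X, the family, and a) and a transversal sequence x_1, x_2, … (that is, x_i ∈ S_i for every i) such that, setting a_k = (1/k)·∑_{i=1}^k x_i, for every integer k ≥ 1 and every real τ > 0 with ρ_X(τ) ≤ 1/k one has ‖a − a_k‖ ≤ C·D/(k·τ). -/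
open Asymptotics Filter Topology

/-- The modulus of smoothness (Lindenstrauss modulus) of a real normed space `X`:
`ρ_X(τ) = sup { (‖x + τy‖ + ‖x − τy‖)/2 − 1 : ‖x‖ = ‖y‖ ≤ 1 }`. -/
noncomputable def modSmooth (X : Type*) [NormedAddCommGroup X] [NormedSpace ℝ X] (τ : ℝ) : ℝ :=
  sSup {r : ℝ | ∃ x y : X, ‖x‖ = ‖y‖ ∧ ‖y‖ ≤ 1 ∧
    r = (‖x + τ • y‖ + ‖x - τ • y‖) / 2 - 1}

/-!
The transversal is chosen greedily, independently of `k` and `τ`. With `v = ∑_{i<j} (a - x_i)`,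
pick `x_j ∈ S_j` with `f (a - x_j) ≤ 0` for a norming functional `f` of `v`; this is possible
because `a` lies in the convex hull of `S_j`. Smoothness then gives
`‖v + (a - x_j)‖ ≤ ‖v‖ + 2‖v‖ρ(‖a - x_j‖/‖v‖)`, and since `ρ(t)/t` is nondecreasing this increment
is at most `2Dρ(τ)/τ ≤ 2D/(kτ)` as long as `‖v‖ ≥ D/τ`. Below that threshold the increment is at
most `D`, so `‖∑_{i<k} (a - x_i)‖ ≤ D/τ + D + 2D/τ`, and `τ ≤ 2` because `τ - 1 ≤ ρ(τ) ≤ 1`.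
-/

section ModulusOfSmoothness

variable {X : Type*} [NormedAddCommGroup X] [NormedSpace ℝ X]

theorem le_modSmooth {x y : X} (hxy : ‖x‖ = ‖y‖) (hy : ‖y‖ ≤ 1) (τ : ℝ) :
    (‖x + τ • y‖ + ‖x - τ • y‖) / 2 - 1 ≤ modSmooth X τ := by
  refine le_csSup ⟨|τ|, ?_⟩ ⟨x, y, hxy, hy, rfl⟩
  rintro _ ⟨x, y, hxy, hy, rfl⟩
  have hτy : ‖τ • y‖ ≤ |τ| := by
    rw [norm_smul, Real.norm_eq_abs]; exact mul_le_of_le_one_right (abs_nonneg τ) hy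
  linarith [norm_add_le x (τ • y), norm_sub_le x (τ • y)]

theorem half_abs_add_abs_sub_one_le_modSmooth [Nontrivial X] (τ : ℝ) :
    (|1 + τ| + |1 - τ|) / 2 - 1 ≤ modSmooth X τ := by
  obtain ⟨u, hu⟩ := exists_norm_eq X zero_le_one
  have h := le_modSmooth rfl hu.le τ
  rwa [show u + τ • u = (1 + τ) • u by module, show u - τ • u = (1 - τ) • u by module,
    norm_smul, norm_smul, hu, mul_one, mul_one, Real.norm_eq_abs, Real.norm_eq_abs] at h

theorem modSmooth_nonneg [Nontrivial X] (τ : ℝ) : 0 ≤ modSmooth X τ := by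
  linarith [half_abs_add_abs_sub_one_le_modSmooth (X := X) τ, le_abs_self (1 + τ),
    le_abs_self (1 - τ)]

theorem sub_one_le_modSmooth [Nontrivial X] (τ : ℝ) : τ - 1 ≤ modSmooth X τ := by
  linarith [half_abs_add_abs_sub_one_le_modSmooth (X := X) τ, le_abs_self (1 + τ),
    neg_abs_le (1 - τ)]

theorem modSmooth_mul_le {c : ℝ} (hc₀ : 0 ≤ c) (hc₁ : c ≤ 1) (τ : ℝ) :
    modSmooth X (c * τ) ≤ c * modSmooth X τ := by
  refine csSup_le ⟨_, 0, 0, rfl, by simp, rfl⟩ ?_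
  rintro _ ⟨x, y, hxy, hy, rfl⟩
  have hx : ‖x‖ ≤ 1 := hxy ▸ hy
  have hconv : ∀ z : X, ‖c • z + (1 - c) • x‖ ≤ c * ‖z‖ + (1 - c) := fun z => by
    calc ‖c • z + (1 - c) • x‖ ≤ c * ‖z‖ + (1 - c) * ‖x‖ := by
          refine (norm_add_le _ _).trans_eq ?_
          rw [norm_smul, norm_smul, Real.norm_of_nonneg hc₀, Real.norm_of_nonneg (by linarith)]
      _ ≤ c * ‖z‖ + (1 - c) := by nlinarith
  have hadd := hconv (x + τ • y)
  have hsub := hconv (x - τ • y)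
  rw [show c • (x + τ • y) + (1 - c) • x = x + (c * τ) • y by module] at hadd
  rw [show c • (x - τ • y) + (1 - c) • x = x - (c * τ) • y by module] at hsub
  nlinarith [le_modSmooth hxy hy τ]

theorem mul_modSmooth_div_le {r s τ : ℝ} (hr : 0 < r) (hs : 0 ≤ s) (hτ : 0 < τ)
    (hsr : s ≤ r * τ) : r * modSmooth X (s / r) ≤ s * modSmooth X τ / τ := by
  have hc : s / (r * τ) ≤ 1 := (div_le_one (by positivity)).2 hsr
  calc r * modSmooth X (s / r) = r * modSmooth X (s / (r * τ) * τ) := by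
        congr 2; field_simp
    _ ≤ r * (s / (r * τ) * modSmooth X τ) := by
        gcongr; exact modSmooth_mul_le (by positivity) hc τ
    _ = s * modSmooth X τ / τ := by field_simp

theorem norm_add_add_norm_sub_le {v : X} (hv : v ≠ 0) (w : X) :
    ‖v + w‖ + ‖v - w‖ ≤ 2 * ‖v‖ * (1 + modSmooth X (‖w‖ / ‖v‖)) := by
  have hv₀ : 0 < ‖v‖ := norm_pos_iff.2 hv
  obtain ⟨y, hy, hwy⟩ : ∃ y : X, ‖y‖ = 1 ∧ (‖w‖ / ‖v‖) • y = ‖v‖⁻¹ • w := by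
    rcases eq_or_ne w 0 with rfl | hw
    · exact ⟨‖v‖⁻¹ • v, norm_smul_inv_norm hv, by simp⟩
    · refine ⟨‖w‖⁻¹ • w, norm_smul_inv_norm hw, ?_⟩
      rw [smul_smul, div_mul_eq_mul_div, mul_inv_cancel₀ (norm_ne_zero_iff.2 hw), one_div]
  have hx : ‖‖v‖⁻¹ • v‖ = 1 := by rw [norm_smul, norm_inv, norm_norm, inv_mul_cancel₀ hv₀.ne']
  have h := le_modSmooth (hx.trans hy.symm) hy.le (‖w‖ / ‖v‖)
  rw [hwy, ← smul_add, ← smul_sub, norm_smul, norm_smul, norm_inv, norm_norm] at h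
  calc ‖v + w‖ + ‖v - w‖ = ‖v‖ * (‖v‖⁻¹ * ‖v + w‖ + ‖v‖⁻¹ * ‖v - w‖) := by field_simp
    _ ≤ ‖v‖ * (2 * (1 + modSmooth X (‖w‖ / ‖v‖))) := by gcongr; linarith
    _ = 2 * ‖v‖ * (1 + modSmooth X (‖w‖ / ‖v‖)) := by ring

theorem norm_add_le_of_dual {v w : X} (hv : v ≠ 0) {f : StrongDual ℝ X} (hf : ‖f‖ ≤ 1)
    (hfv : f v = ‖v‖) (hfw : f w ≤ 0) :
    ‖v + w‖ ≤ ‖v‖ + 2 * ‖v‖ * modSmooth X (‖w‖ / ‖v‖) := by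
  have hsub : ‖v‖ - f w ≤ ‖v - w‖ := by
    calc ‖v‖ - f w = f (v - w) := by rw [map_sub, hfv]
      _ ≤ ‖f (v - w)‖ := Real.le_norm_self _
      _ ≤ 1 * ‖v - w‖ := f.le_of_opNorm_le hf _
      _ = ‖v - w‖ := one_mul _
  linarith [norm_add_add_norm_sub_le hv w]

theorem exists_mem_norm_add_sub_le {s : Set X} (hs : Bornology.IsBounded s) {D : ℝ}
    (hD : Metric.diam s ≤ D) {a : X} (ha : a ∈ convexHull ℝ s) (v : X) :
    ∃ p ∈ s, ∀ τ > 0, ‖v + (a - p)‖ ≤ max (D / τ + D) (‖v‖ + 2 * D * modSmooth X τ / τ) := by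
  obtain ⟨f, hf, hfv⟩ := exists_dual_vector'' ℝ v
  obtain ⟨p, hp, hfap⟩ :=
    ((f : X →ₗ[ℝ] ℝ).convexOn convex_univ).exists_ge_of_mem_convexHull (Set.subset_univ s) ha
  refine ⟨p, hp, fun τ hτ => ?_⟩
  have hw : ‖a - p‖ ≤ D := by
    rw [← dist_eq_norm]
    exact (Metric.dist_le_diam_of_mem (isBounded_convexHull.2 hs) ha
      (subset_convexHull ℝ s hp)).trans ((convexHull_diam s).trans_le hD)
  rcases le_or_gt ‖v‖ (D / τ) with hsmall | hlarge
  · exact le_max_of_le_left (by linarith [norm_add_le v (a - p)])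
  have hv₀ : 0 < ‖v‖ := (div_nonneg ((norm_nonneg _).trans hw) hτ.le).trans_lt hlarge
  have hv : v ≠ 0 := norm_pos_iff.1 hv₀
  have : Nontrivial X := nontrivial_of_ne v 0 hv
  have hfw : f (a - p) ≤ 0 := by rw [map_sub]; exact sub_nonpos.2 hfap
  have hwv : ‖a - p‖ ≤ ‖v‖ * τ := by linarith [(div_lt_iff₀ hτ).1 hlarge]
  have hρ : ‖a - p‖ * modSmooth X τ / τ ≤ D * modSmooth X τ / τ := by
    gcongr; exact modSmooth_nonneg τ
  refine le_max_of_le_right ?_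
  calc ‖v + (a - p)‖ ≤ ‖v‖ + 2 * (‖v‖ * modSmooth X (‖a - p‖ / ‖v‖)) := by
        linarith [norm_add_le_of_dual hv hf hfv hfw]
    _ ≤ ‖v‖ + 2 * (D * modSmooth X τ / τ) := by
        linarith [mul_modSmooth_div_le (X := X) hv₀ (norm_nonneg _) hτ hwv]
    _ = ‖v‖ + 2 * D * modSmooth X τ / τ := by ring

end ModulusOfSmoothness

section AdaptiveSum

variable {X : Type*}

def adaptiveSum [AddCommMonoid X] (g : ℕ → X → X) : ℕ → X
  | 0 => 0
  | n + 1 => adaptiveSum g n + g n (adaptiveSum g n)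

theorem adaptiveSum_eq_sum [AddCommMonoid X] (g : ℕ → X → X) (n : ℕ) :
    adaptiveSum g n = ∑ i ∈ Finset.range n, g i (adaptiveSum g i) := by
  induction n with
  | zero => rfl
  | succ n ih => rw [Finset.sum_range_succ, ← ih, adaptiveSum]

theorem norm_adaptiveSum_le [SeminormedAddCommGroup X] {g : ℕ → X → X} {b ε : ℝ} (hb : 0 ≤ b)
    (hε : 0 ≤ ε) (hg : ∀ n v, ‖v + g n v‖ ≤ max b (‖v‖ + ε)) (n : ℕ) :
    ‖adaptiveSum g n‖ ≤ b + n * ε := by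
  induction n with
  | zero => simpa [adaptiveSum] using hb
  | succ n ih =>
    refine (hg n _).trans (max_le ?_ ?_) <;> push_cast <;> nlinarith

end AdaptiveSum

theorem sub_inv_smul_sum_range {X : Type*} [AddCommGroup X] [Module ℝ X] (a : X) (x : ℕ → X)
    {k : ℕ} (hk : k ≠ 0) :
    a - (k : ℝ)⁻¹ • ∑ i ∈ Finset.range k, x i = (k : ℝ)⁻¹ • ∑ i ∈ Finset.range k, (a - x i) := by
  rw [Finset.sum_sub_distrib, Finset.sum_const, Finset.card_range, smul_sub,
    ← Nat.cast_smul_eq_nsmul ℝ, smul_smul, inv_mul_cancel₀ (Nat.cast_ne_zero.2 hk), one_smul]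

theorem colorful_no_dim_caratheodory_general {X : Type*} [NormedAddCommGroup X] [NormedSpace ℝ X]
    (S : ℕ → Set X) (hSb : ∀ i, Bornology.IsBounded (S i))
    (D : ℝ) (hD : ∀ i, Metric.diam (S i) ≤ D)
    (a : X) (ha : a ∈ ⋂ i, convexHull ℝ (S i)) :
    ∃ C : ℝ, 0 < C ∧ ∃ x : ℕ → X, (∀ i, x i ∈ S i) ∧
      ∀ k : ℕ, 1 ≤ k → ∀ τ : ℝ, 0 < τ → modSmooth X τ ≤ 1 / (k : ℝ) →
        ‖a - (k : ℝ)⁻¹ • ∑ i ∈ Finset.range k, x i‖ ≤ C * D / ((k : ℝ) * τ) := by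
  choose p hpS hp using fun n =>
    exists_mem_norm_add_sub_le (hSb n) (hD n) (Set.mem_iInter.1 ha n)
  set g : ℕ → X → X := fun n v => a - p n v
  refine ⟨5, by norm_num, fun n => p n (adaptiveSum g n), fun n => hpS n _, ?_⟩
  intro k hk τ hτ hρ
  have hD₀ : 0 ≤ D := Metric.diam_nonneg.trans (hD 0)
  have hrepr : a - (k : ℝ)⁻¹ • ∑ i ∈ Finset.range k, p i (adaptiveSum g i) =
      (k : ℝ)⁻¹ • adaptiveSum g k := by
    rw [sub_inv_smul_sum_range a _ (Nat.one_le_iff_ne_zero.1 hk), adaptiveSum_eq_sum]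
  rw [hrepr, norm_smul, norm_inv, RCLike.norm_natCast]
  rcases subsingleton_or_nontrivial X with hX | hX
  · rw [Subsingleton.elim (adaptiveSum g k) 0, norm_zero, mul_zero]
    positivity
  have hk₁ : (1 : ℝ) ≤ k := by exact_mod_cast hk
  have hkρ : k * modSmooth X τ ≤ 1 := by rwa [le_div_iff₀' (by positivity)] at hρ
  have hρ₀ := modSmooth_nonneg (X := X) τ
  have hτ₂ : τ ≤ 2 := by nlinarith [sub_one_le_modSmooth (X := X) τ]
  have hsum := norm_adaptiveSum_le (g := g) (by positivity) (by positivity)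
    (fun n v => hp n v τ hτ) k
  have hgrowth : k * (2 * D * modSmooth X τ / τ) ≤ 2 * (D / τ) := by
    rw [← mul_div_assoc, mul_div_assoc', div_le_div_iff_of_pos_right hτ]; nlinarith
  have hD_le : D ≤ 2 * (D / τ) := by rw [← mul_div_assoc, le_div_iff₀ hτ]; nlinarith
  calc (k : ℝ)⁻¹ * ‖adaptiveSum g k‖ ≤ (k : ℝ)⁻¹ * (5 * (D / τ)) := by
        gcongr
        linarith
    _ = 5 * D / (k * τ) := by field_simp

/-- Colorful no-dimension Carathéodory theorem in uniformly smooth Banach spaces: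
for a family of sets `S i` with `a ∈ ⋂ conv (S i)` and diameters uniformly bounded
by `D`, there is an absolute constant `C > 0` and a transversal sequence `x i ∈ S i`
whose running averages `a_k` satisfy `‖a − a_k‖ ≤ C · D / (k · τ)` whenever
`ρ_X(τ) ≤ 1/k`. -/
theorem colorful_no_dim_caratheodory {X : Type*} [NormedAddCommGroup X] [NormedSpace ℝ X]
    [CompleteSpace X]
    (hus : (fun t => modSmooth X t) =o[𝓝[>] (0 : ℝ)] fun t => t)
    (S : ℕ → Set X) (hSb : ∀ i, Bornology.IsBounded (S i))
    (D : ℝ) (hD : ∀ i, Metric.diam (S i) ≤ D)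
    (a : X) (ha : a ∈ ⋂ i, convexHull ℝ (S i)) :
    ∃ C : ℝ, 0 < C ∧ ∃ x : ℕ → X, (∀ i, x i ∈ S i) ∧
      ∀ k : ℕ, 1 ≤ k → ∀ τ : ℝ, 0 < τ → modSmooth X τ ≤ 1 / (k : ℝ) →
        ‖a - (k : ℝ)⁻¹ • ∑ i ∈ Finset.range k, x i‖ ≤ C * D / ((k : ℝ) * τ) :=
  colorful_no_dim_caratheodory_general S hSb D hD a ha
end

section
/- Let X be a real Banach space with modulus of smoothness ρ_X, let u ∈ X be a nonzero vector, let f be a continuous linear functional on X with ‖f‖ = 1 and f(u) = ‖u‖, and let x ∈ X satisfy f(x) ≤ 0. Then ‖u + x‖ ≤ ‖u‖·(1 + 2·ρ_X(‖x‖/‖u‖)). -/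
section ModSmooth

variable {X : Type*} [NormedAddCommGroup X] [NormedSpace ℝ X]

lemma bddAbove_modSmooth_set (τ : ℝ) :
    BddAbove {r : ℝ | ∃ x y : X, ‖x‖ = ‖y‖ ∧ ‖y‖ ≤ 1 ∧
      r = (‖x + τ • y‖ + ‖x - τ • y‖) / 2 - 1} := by
  refine ⟨|τ|, ?_⟩
  rintro r ⟨a, b, hab, hb, rfl⟩
  have hτb : ‖τ • b‖ ≤ |τ| := by
    rw [norm_smul, Real.norm_eq_abs]
    exact mul_le_of_le_one_right (abs_nonneg τ) hb
  have hplus := norm_add_le a (τ • b)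
  have hminus := norm_sub_le a (τ • b)
  linarith

lemma le_modSmooth_s4 (τ : ℝ) {a b : X} (hab : ‖a‖ = ‖b‖) (hb : ‖b‖ ≤ 1) :
    (‖a + τ • b‖ + ‖a - τ • b‖) / 2 - 1 ≤ modSmooth X τ :=
  le_csSup (bddAbove_modSmooth_set τ) ⟨a, b, hab, hb, rfl⟩

lemma exists_norm_eq_one_and_eq_norm_smul [Nontrivial X] (x : X) :
    ∃ b : X, ‖b‖ = 1 ∧ x = ‖x‖ • b := by
  by_cases hx : x = 0
  · obtain ⟨b, hb⟩ := exists_norm_eq X zero_le_one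
    exact ⟨b, hb, by simp [hx]⟩
  · refine ⟨‖x‖⁻¹ • x, norm_smul_inv_norm hx, ?_⟩
    rw [smul_inv_smul₀ (norm_ne_zero_iff.mpr hx)]

lemma norm_add_add_norm_sub_le_modSmooth {u : X} (hu : u ≠ 0) (x : X) :
    ‖u + x‖ + ‖u - x‖ ≤ 2 * ‖u‖ * (1 + modSmooth X (‖x‖ / ‖u‖)) := by
  have : Nontrivial X := ⟨⟨u, 0, hu⟩⟩
  obtain ⟨b, hb, hxb⟩ := exists_norm_eq_one_and_eq_norm_smul x
  have hscale : (‖x‖ / ‖u‖) • b = ‖u‖⁻¹ • x := by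
    rw [div_eq_inv_mul, mul_smul, ← hxb]
  have hρ := le_modSmooth_s4 (‖x‖ / ‖u‖) (a := ‖u‖⁻¹ • u) (b := b)
    (by rw [hb]; exact norm_smul_inv_norm hu) hb.le
  rw [hscale, ← smul_add, ← smul_sub, norm_smul, norm_smul, norm_inv, norm_norm,
    ← mul_add, inv_mul_eq_div] at hρ
  rw [div_div, sub_le_iff_le_add, div_le_iff₀ (by positivity)] at hρ
  linarith

end ModSmooth

lemma norm_le_norm_sub_of_map_nonpos {X : Type*} [SeminormedAddCommGroup X] [NormedSpace ℝ X]
    {f : X →L[ℝ] ℝ} (hf : ‖f‖ ≤ 1) {u x : X} (hfu : f u = ‖u‖) (hx : f x ≤ 0) :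
    ‖u‖ ≤ ‖u - x‖ :=
  calc ‖u‖ ≤ f (u - x) := by rw [map_sub, hfu]; linarith
    _ ≤ ‖u - x‖ := (le_abs_self _).trans ((f.le_of_opNorm_le hf _).trans_eq (one_mul _))

theorem norm_add_le_of_norming_functional_scaled_general {X : Type*} [NormedAddCommGroup X]
    [NormedSpace ℝ X]
    (u : X) (hu : u ≠ 0) (f : X →L[ℝ] ℝ) (hf : ‖f‖ = 1) (hfu : f u = ‖u‖)
    (x : X) (hx : f x ≤ 0) :
    ‖u + x‖ ≤ ‖u‖ * (1 + 2 * modSmooth X (‖x‖ / ‖u‖)) := by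
  have hsum := norm_add_add_norm_sub_le_modSmooth hu x
  have hminus := norm_le_norm_sub_of_map_nonpos hf.le hfu hx
  linarith

/-- Scaled supporting-hyperplane lemma: if `u ≠ 0`, `f` is a norming functional of `u`,
and `f x ≤ 0`, then `‖u + x‖ ≤ ‖u‖ (1 + 2 ρ_X(‖x‖/‖u‖))`. -/
theorem norm_add_le_of_norming_functional_scaled {X : Type*} [NormedAddCommGroup X]
    [NormedSpace ℝ X] [CompleteSpace X]
    (u : X) (hu : u ≠ 0) (f : X →L[ℝ] ℝ) (hf : ‖f‖ = 1) (hfu : f u = ‖u‖)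
    (x : X) (hx : f x ≤ 0) :
    ‖u + x‖ ≤ ‖u‖ * (1 + 2 * modSmooth X (‖x‖ / ‖u‖)) :=
  norm_add_le_of_norming_functional_scaled_general u hu f hf hfu x hx
end
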